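/- arXiv:2405.06627 — 5 statements merged into one kernel-verified Lean document; each statement's English description precedes it below -/
import Mathlib

section
/- Let Z₁,...,Z_{n+1} be random variables taking values in a finite set with joint probability mass function f, and suppose the observed unordered multiset of values is {z₁,...,z_{n+1}} with all values distinct. Then for each i ∈ {1,...,n+1}, the conditional probability that Z_{n+1} = z_i, given the event E_z that {Z₁,...,Z_{n+1}} = {z₁,...,z_{n+1}}, equals (∑_{σ : σ(n+1)=i} f(z_{σ(1)},...,z_{σ(n+1)})) / (∑_σ f(z_{σ(1)},...,z_{σ(n+1)})), where the sums are over permutations σ of {1,...,n+1} (assuming the denominator is positive). -/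
open scoped Classical

/-- For discrete random variables `Z₁,...,Z_{n+1}` with joint PMF `f`
and distinct observed values `z₁,...,z_{n+1}`, the conditional probability that
`Z_{n+1} = z_i` given the multiset event `E_z` equals the ratio of permutation sums. -/
theorem conditional_prob_eq_permutation_ratio
    {V : Type*} [Fintype V] (n : ℕ)
    (f : (Fin (n + 1) → V) → ℝ) (hf0 : ∀ v, 0 ≤ f v) (hf1 : ∑ v, f v = 1)
    (z : Fin (n + 1) → V) (hz : Function.Injective z) (i : Fin (n + 1))
    (hden : 0 < ∑ σ : Equiv.Perm (Fin (n + 1)), f (z ∘ σ)) :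
    (∑ v ∈ Finset.univ.filter (fun v : Fin (n + 1) → V =>
        (∃ σ : Equiv.Perm (Fin (n + 1)), v = z ∘ σ) ∧ v (Fin.last n) = z i), f v) /
      (∑ v ∈ Finset.univ.filter (fun v : Fin (n + 1) → V =>
        ∃ σ : Equiv.Perm (Fin (n + 1)), v = z ∘ σ), f v)
    = (∑ σ ∈ Finset.univ.filter
          (fun σ : Equiv.Perm (Fin (n + 1)) => σ (Fin.last n) = i), f (z ∘ σ)) /
      (∑ σ : Equiv.Perm (Fin (n + 1)), f (z ∘ σ)) := by
  have hinj : Function.Injective (fun σ : Equiv.Perm (Fin (n + 1)) => z ∘ σ) := by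
    intro σ τ h
    exact Equiv.Perm.ext fun x => hz (congrFun h x)
  have h1 : (Finset.univ.filter (fun v : Fin (n + 1) → V =>
      ∃ σ : Equiv.Perm (Fin (n + 1)), v = z ∘ σ))
      = Finset.univ.image (fun σ : Equiv.Perm (Fin (n + 1)) => z ∘ σ) := by
    ext v
    simp [eq_comm]
  have h2 : (Finset.univ.filter (fun v : Fin (n + 1) → V =>
      (∃ σ : Equiv.Perm (Fin (n + 1)), v = z ∘ σ) ∧ v (Fin.last n) = z i))
      = (Finset.univ.filter
          (fun σ : Equiv.Perm (Fin (n + 1)) => σ (Fin.last n) = i)).image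
          (fun σ : Equiv.Perm (Fin (n + 1)) => z ∘ σ) := by
    ext v
    simp only [Finset.mem_filter, Finset.mem_image, Finset.mem_univ, true_and]
    constructor
    · rintro ⟨⟨σ, rfl⟩, hlast⟩
      exact ⟨σ, hz hlast, rfl⟩
    · rintro ⟨σ, hσ, rfl⟩
      exact ⟨⟨σ, rfl⟩, by simp [hσ]⟩
  rw [h1, h2, Finset.sum_image (fun a _ b _ h => hinj h),
    Finset.sum_image (fun a _ b _ h => hinj h)]
end

section
/- Let f be a joint PMF of Z₁,...,Z_{n+1} that is weighted exchangeable with weight functions w₁,...,w_{n+1} and core function g, i.e., f(v₁,...,v_{n+1}) = (∏_{i=1}^{n+1} w_i(v_i)) · g(v₁,...,v_{n+1}) where g is invariant under permutations of its inputs. Then for distinct observed values z₁,...,z_{n+1} with ∑_σ ∏_j w_j(z_{σ(j)}) · g(z₁,...,z_{n+1}) > 0, the conditional probability that Z_{n+1} = z_i given the multiset event E_z equals (∑_{σ : σ(n+1)=i} ∏_{j=1}^{n+1} w_j(z_{σ(j)})) / (∑_σ ∏_{j=1}^{n+1} w_j(z_{σ(j)})). -/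
open scoped Classical

/-- For a weighted exchangeable joint PMF
`f(v) = (∏ i, w i (v i)) * g v` with permutation-invariant core `g`, the
conditional probability that `Z_{n+1} = z_i` given the multiset event `E_z`
equals the normalized sum of weight products over permutations. -/
theorem weighted_exchangeable_conditional_prob
    {V : Type*} [Fintype V] (n : ℕ)
    (f : (Fin (n + 1) → V) → ℝ) (hf0 : ∀ v, 0 ≤ f v) (hf1 : ∑ v, f v = 1)
    (w : Fin (n + 1) → V → ℝ) (hw : ∀ j x, 0 ≤ w j x)
    (g : (Fin (n + 1) → V) → ℝ)
    (hfac : ∀ v, f v = (∏ j, w j (v j)) * g v)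
    (hg : ∀ (σ : Equiv.Perm (Fin (n + 1))) (v : Fin (n + 1) → V), g (v ∘ σ) = g v)
    (z : Fin (n + 1) → V) (hz : Function.Injective z) (i : Fin (n + 1))
    (hden : 0 < (∑ σ : Equiv.Perm (Fin (n + 1)), ∏ j, w j (z (σ j))) * g z) :
    (∑ v ∈ Finset.univ.filter (fun v : Fin (n + 1) → V =>
        (∃ σ : Equiv.Perm (Fin (n + 1)), v = z ∘ σ) ∧ v (Fin.last n) = z i), f v) /
      (∑ v ∈ Finset.univ.filter (fun v : Fin (n + 1) → V =>
        ∃ σ : Equiv.Perm (Fin (n + 1)), v = z ∘ σ), f v)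
    = (∑ σ ∈ Finset.univ.filter
          (fun σ : Equiv.Perm (Fin (n + 1)) => σ (Fin.last n) = i), ∏ j, w j (z (σ j))) /
      (∑ σ : Equiv.Perm (Fin (n + 1)), ∏ j, w j (z (σ j))) := by
  have hzne : Function.Injective (fun σ : Equiv.Perm (Fin (n + 1)) => z ∘ σ) := by
    intro σ τ h
    exact Equiv.ext fun j => hz (congrFun h j)
  have hfz : ∀ σ : Equiv.Perm (Fin (n + 1)),
      f (z ∘ σ) = (∏ j, w j (z (σ j))) * g z := by
    intro σ
    rw [hfac, hg σ z]
    rfl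
  -- denominator
  have hden_eq : (∑ v ∈ Finset.univ.filter (fun v : Fin (n + 1) → V =>
        ∃ σ : Equiv.Perm (Fin (n + 1)), v = z ∘ σ), f v)
      = (∑ σ : Equiv.Perm (Fin (n + 1)), ∏ j, w j (z (σ j))) * g z := by
    have himg : Finset.univ.filter (fun v : Fin (n + 1) → V =>
        ∃ σ : Equiv.Perm (Fin (n + 1)), v = z ∘ σ)
        = Finset.image (fun σ : Equiv.Perm (Fin (n + 1)) => z ∘ σ) Finset.univ := by
      ext v
      simp only [Finset.mem_filter, Finset.mem_univ, true_and, Finset.mem_image]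
      constructor
      · rintro ⟨σ, rfl⟩; exact ⟨σ, rfl⟩
      · rintro ⟨σ, rfl⟩; exact ⟨σ, rfl⟩
    rw [himg, Finset.sum_image (fun a _ b _ h => hzne h), Finset.sum_mul]
    exact Finset.sum_congr rfl (fun σ _ => hfz σ)
  -- numerator
  have hnum_eq : (∑ v ∈ Finset.univ.filter (fun v : Fin (n + 1) → V =>
        (∃ σ : Equiv.Perm (Fin (n + 1)), v = z ∘ σ) ∧ v (Fin.last n) = z i), f v)
      = (∑ σ ∈ Finset.univ.filter
          (fun σ : Equiv.Perm (Fin (n + 1)) => σ (Fin.last n) = i),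
          ∏ j, w j (z (σ j))) * g z := by
    have himg : Finset.univ.filter (fun v : Fin (n + 1) → V =>
        (∃ σ : Equiv.Perm (Fin (n + 1)), v = z ∘ σ) ∧ v (Fin.last n) = z i)
        = Finset.image (fun σ : Equiv.Perm (Fin (n + 1)) => z ∘ σ)
          (Finset.univ.filter (fun σ : Equiv.Perm (Fin (n + 1)) => σ (Fin.last n) = i)) := by
      ext v
      simp only [Finset.mem_filter, Finset.mem_univ, true_and, Finset.mem_image]
      constructor
      · rintro ⟨⟨σ, rfl⟩, hlast⟩
        exact ⟨σ, hz hlast, rfl⟩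
      · rintro ⟨σ, hσ, rfl⟩
        exact ⟨⟨σ, rfl⟩, by simp [hσ]⟩
    rw [himg, Finset.sum_image (fun a _ b _ h => hzne h), Finset.sum_mul]
    exact Finset.sum_congr rfl (fun σ _ => hfz σ)
  have hgz : g z ≠ 0 := by
    intro h
    rw [h, mul_zero] at hden
    exact lt_irrefl 0 hden
  rw [hnum_eq, hden_eq, mul_div_mul_right _ _ hgz]
end

section
/- Let Z₁,...,Z_{n+1} be discrete random variables with arbitrary joint PMF f, taking almost-surely distinct values. Define conformal weights P_{n+1}{z_i | E_z} = (∑_{σ:σ(n+1)=i} f(z_{σ(1)},...,z_{σ(n+1)})) / (∑_σ f(z_{σ(1)},...,z_{σ(n+1)})). Then conditional on the multiset event E_z, the random value Z_{n+1} is distributed according to ∑_{i=1}^{n+1} P_{n+1}{z_i | E_z} δ_{z_i}, and hence for any β ∈ (0,1), P(Z_{n+1} ≤ Q_β(∑_i P_{n+1}{z_i | E_z} δ_{z_i}) | E_z) ≥ β (when values are real). -/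
open scoped Classical

/-- for an arbitrary joint PMF `f` with distinct real values,
conditional on the multiset event `E_z` the test variable `Z_{n+1}` is
distributed according to the conformal weights
`P_{n+1}{z_i | E_z} = (∑_{σ : σ(n+1)=i} f(z∘σ)) / (∑_σ f(z∘σ))`, and hence the
weighted-quantile coverage bound holds conditionally. -/
theorem general_conditional_distribution_and_quantile
    (n : ℕ) (Vs : Finset ℝ)
    (f : (Fin (n + 1) → ↥Vs) → ℝ) (hf0 : ∀ v, 0 ≤ f v) (hf1 : ∑ v, f v = 1)
    (z : Fin (n + 1) → ↥Vs) (hz : Function.Injective z)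
    (β : ℝ) (hβ : β ∈ Set.Ioo (0 : ℝ) 1)
    (hden : 0 < ∑ σ : Equiv.Perm (Fin (n + 1)), f (z ∘ σ))
    (w : Fin (n + 1) → ℝ)
    (hw : ∀ i, w i = (∑ σ ∈ Finset.univ.filter
        (fun σ : Equiv.Perm (Fin (n + 1)) => σ (Fin.last n) = i), f (z ∘ σ)) /
      (∑ σ : Equiv.Perm (Fin (n + 1)), f (z ∘ σ)))
    (q : ℝ)
    (hq : q = sInf {x : ℝ | ∃ i : Fin (n + 1), (z i : ℝ) = x ∧
        β ≤ ∑ j ∈ Finset.univ.filter (fun j => (z j : ℝ) ≤ (z i : ℝ)), w j}) :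
    (∀ i : Fin (n + 1),
        (∑ v ∈ Finset.univ.filter (fun v : Fin (n + 1) → ↥Vs =>
            (∃ σ : Equiv.Perm (Fin (n + 1)), v = z ∘ σ) ∧ v (Fin.last n) = z i), f v)
          = w i * ∑ v ∈ Finset.univ.filter (fun v : Fin (n + 1) → ↥Vs =>
              ∃ σ : Equiv.Perm (Fin (n + 1)), v = z ∘ σ), f v)
    ∧ β * (∑ v ∈ Finset.univ.filter (fun v : Fin (n + 1) → ↥Vs =>
          ∃ σ : Equiv.Perm (Fin (n + 1)), v = z ∘ σ), f v) ≤
        ∑ v ∈ Finset.univ.filter (fun v : Fin (n + 1) → ↥Vs =>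
          (∃ σ : Equiv.Perm (Fin (n + 1)), v = z ∘ σ) ∧ ((v (Fin.last n) : ℝ) ≤ q)), f v := by
  set S := ∑ σ : Equiv.Perm (Fin (n + 1)), f (z ∘ σ) with hS
  have hinj : Function.Injective (fun σ : Equiv.Perm (Fin (n + 1)) => z ∘ σ) := by
    intro σ τ h
    apply Equiv.coe_fn_injective
    funext x
    exact hz (congrFun h x)
  -- generic transfer lemma
  have key : ∀ p : (Fin (n + 1) → ↥Vs) → Prop,
      (∑ v ∈ Finset.univ.filter (fun v : Fin (n + 1) → ↥Vs =>
          (∃ σ : Equiv.Perm (Fin (n + 1)), v = z ∘ σ) ∧ p v), f v)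
        = ∑ σ ∈ Finset.univ.filter (fun σ : Equiv.Perm (Fin (n + 1)) => p (z ∘ σ)),
            f (z ∘ σ) := by
    intro p
    refine (Finset.sum_bij (fun (σ : Equiv.Perm (Fin (n+1))) (_ : σ ∈ Finset.univ.filter (fun σ : Equiv.Perm (Fin (n + 1)) => p (z ∘ σ))) => z ∘ σ) ?_ ?_ ?_ ?_).symm
    · intro σ hσ
      simp only [Finset.mem_filter, Finset.mem_univ, true_and] at hσ ⊢
      exact ⟨⟨σ, rfl⟩, hσ⟩
    · intro a _ b _ h
      exact hinj h
    · intro v hv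
      simp only [Finset.mem_filter, Finset.mem_univ, true_and] at hv
      obtain ⟨⟨σ, rfl⟩, hp⟩ := hv
      exact ⟨σ, by simpa using hp, rfl⟩
    · intro σ _; rfl
  have hSeq : (∑ v ∈ Finset.univ.filter (fun v : Fin (n + 1) → ↥Vs =>
      ∃ σ : Equiv.Perm (Fin (n + 1)), v = z ∘ σ), f v) = S := by
    have := key (fun _ => True)
    simpa using this
  set Num : Fin (n + 1) → ℝ := fun i =>
    ∑ σ ∈ Finset.univ.filter (fun σ : Equiv.Perm (Fin (n + 1)) => σ (Fin.last n) = i),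
      f (z ∘ σ) with hNum
  have hwS : ∀ i, w i * S = Num i := by
    intro i
    rw [hw i, div_mul_cancel₀]
    exact ne_of_gt hden
  have part1 : ∀ i : Fin (n + 1),
      (∑ v ∈ Finset.univ.filter (fun v : Fin (n + 1) → ↥Vs =>
          (∃ σ : Equiv.Perm (Fin (n + 1)), v = z ∘ σ) ∧ v (Fin.last n) = z i), f v)
        = w i * ∑ v ∈ Finset.univ.filter (fun v : Fin (n + 1) → ↥Vs =>
            ∃ σ : Equiv.Perm (Fin (n + 1)), v = z ∘ σ), f v := by
    intro i
    rw [hSeq, hwS i]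
    simp only [hNum]
    refine (Finset.sum_bij (fun (σ : Equiv.Perm (Fin (n+1)))
      (_ : σ ∈ Finset.univ.filter (fun σ : Equiv.Perm (Fin (n + 1)) =>
        σ (Fin.last n) = i)) => z ∘ σ) ?_ ?_ ?_ ?_).symm
    · intro σ hσ
      simp only [Finset.mem_filter, Finset.mem_univ, true_and] at hσ ⊢
      exact ⟨⟨σ, rfl⟩, by rw [Function.comp_apply, hσ]⟩
    · intro a _ b _ h
      exact hinj h
    · intro v hv
      simp only [Finset.mem_filter, Finset.mem_univ, true_and] at hv
      obtain ⟨⟨σ, rfl⟩, hp⟩ := hv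
      refine ⟨σ, ?_, rfl⟩
      simp only [Finset.mem_filter, Finset.mem_univ, true_and]
      exact hz hp
    · intro σ _
      rfl
  refine ⟨part1, ?_⟩
  -- sum of Num over all i equals S
  have hfib : ∑ i, Num i = S := by
    rw [hNum, hS]
    exact Finset.sum_fiberwise_of_maps_to (fun σ _ => Finset.mem_univ (σ (Fin.last n))) _
  have hwsum : ∑ i, w i = 1 := by
    have h : (∑ i, w i) * S = 1 * S := by
      rw [Finset.sum_mul, one_mul]
      simp_rw [hwS]
      exact hfib
    exact mul_right_cancel₀ (ne_of_gt hden) h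
  -- the quantile set
  set A : Set ℝ := {x : ℝ | ∃ i : Fin (n + 1), (z i : ℝ) = x ∧
      β ≤ ∑ j ∈ Finset.univ.filter (fun j => (z j : ℝ) ≤ (z i : ℝ)), w j} with hA
  have hAsub : A ⊆ Set.range (fun i => (z i : ℝ)) := by
    rintro x ⟨i, hix, _⟩; exact ⟨i, hix⟩
  have hAfin : A.Finite := Set.Finite.subset (Set.finite_range _) hAsub
  have hAne : A.Nonempty := by
    obtain ⟨i0, _, hi0⟩ := Finset.exists_max_image Finset.univ (fun i => (z i : ℝ))
      ⟨0, Finset.mem_univ 0⟩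
    refine ⟨(z i0 : ℝ), i0, rfl, ?_⟩
    have : Finset.univ.filter (fun j => (z j : ℝ) ≤ (z i0 : ℝ)) = Finset.univ := by
      apply Finset.filter_true_of_mem
      intro j _
      exact hi0 j (Finset.mem_univ j)
    rw [this, hwsum]
    exact le_of_lt hβ.2
  have hqA : q ∈ A := by
    rw [hq]
    exact hAne.csInf_mem hAfin
  obtain ⟨i, hiq, hile⟩ := hqA
  rw [hiq] at hile
  -- rewrite RHS
  rw [hSeq, key (fun v => ((v (Fin.last n) : ℝ) ≤ q))]
  simp only [Function.comp_apply]
  have hgroup : (∑ σ ∈ Finset.univ.filter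
      (fun σ : Equiv.Perm (Fin (n + 1)) => ((z (σ (Fin.last n)) : ℝ) ≤ q)), f (z ∘ σ))
      = ∑ j ∈ Finset.univ.filter (fun j => (z j : ℝ) ≤ q), Num j := by
    rw [hNum]
    rw [← Finset.sum_fiberwise_of_maps_to (g := fun σ : Equiv.Perm (Fin (n + 1)) =>
      σ (Fin.last n)) (t := Finset.univ.filter (fun j => (z j : ℝ) ≤ q)) ?_ (fun σ => f (z ∘ σ))]
    · apply Finset.sum_congr rfl
      intro j hj
      simp only [Finset.mem_filter, Finset.mem_univ, true_and] at hj
      apply Finset.sum_congr _ (fun _ _ => rfl)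
      rw [Finset.filter_filter]
      apply Finset.filter_congr
      intro σ _
      constructor
      · rintro ⟨_, h⟩; exact h
      · intro h; exact ⟨by rw [h]; exact hj, h⟩
    · intro σ hσ
      simp only [Finset.mem_filter, Finset.mem_univ, true_and] at hσ ⊢
      exact hσ
  rw [hgroup]
  calc β * S ≤ (∑ j ∈ Finset.univ.filter (fun j => (z j : ℝ) ≤ q), w j) * S := by
        apply mul_le_mul_of_nonneg_right hile (le_of_lt hden)
    _ = ∑ j ∈ Finset.univ.filter (fun j => (z j : ℝ) ≤ q), Num j := by
        rw [Finset.sum_mul]; exact Finset.sum_congr rfl (fun j _ => hwS j)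
end

section
/- (General conformal coverage theorem, discrete version.) Let Z₁,...,Z_{n+1} be discrete random variables with joint PMF f and almost-surely distinct real score values V₁,...,V_{n+1} obtained by a fixed symmetric score function applied to the multiset of observations. Define the prediction event as V_{n+1} ≤ Q_{1-α}(∑_{i=1}^{n} P_{n+1}{Z_i | E_z} δ_{V_i} + P_{n+1}{Z_{n+1} | E_z} δ_{+∞}), where P_{n+1}{z_i | E_z} = (∑_{σ:σ(n+1)=i} f(z_{σ(1)},...,z_{σ(n+1)})) / (∑_σ f(z_{σ(1)},...,z_{σ(n+1)})). Then this event has probability at least 1-α, for any α ∈ (0,1), with no assumptions on f beyond being a valid joint PMF. -/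
open scoped Classical

noncomputable def confF {m : ℕ} (w : Fin m → EReal) (p : Fin m → ℝ) (t : EReal) : ℝ :=
  ∑ i ∈ Finset.univ.filter (fun i => w i ≤ t), p i

noncomputable def confQ {m : ℕ} (α : ℝ) (w : Fin m → EReal) (p : Fin m → ℝ) : EReal :=
  sInf {t : EReal | 1 - α ≤ confF w p t}

/-- quantile coverage -/
lemma confQ_cov {m : ℕ} {α : ℝ} (hα0 : 0 < α) (w : Fin m → EReal) (p : Fin m → ℝ)
    (hp1 : ∑ i, p i = 1) :
    1 - α ≤ confF w p (confQ α w p) := by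
  classical
  set A : Set EReal := {t : EReal | 1 - α ≤ confF w p t} with hA
  set q : EReal := sInf A with hq
  have hqQ : confQ α w p = q := rfl
  rw [hqQ]
  by_cases hall : ∀ i, w i ≤ q
  · have he : Finset.univ.filter (fun i => w i ≤ q) = Finset.univ := by
      ext i; simp [hall i]
    rw [confF, he, hp1]; linarith
  · push_neg at hall
    obtain ⟨i0, hi0⟩ := hall
    set B : Finset (Fin m) := Finset.univ.filter (fun i => q < w i) with hB
    have hBne : B.Nonempty := ⟨i0, by simp [hB, hi0]⟩
    set t' : EReal := B.inf' hBne w with ht'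
    have hqt' : q < t' := by
      rw [ht', Finset.lt_inf'_iff]
      intro i hi
      exact (Finset.mem_filter.mp hi).2
    have hex : ∃ t ∈ A, t < t' := by
      by_contra h
      push_neg at h
      have : t' ≤ q := le_sInf h
      exact absurd hqt' (not_lt.mpr this)
    obtain ⟨t, htA, htt'⟩ := hex
    have hqt : q ≤ t := sInf_le htA
    have hfe : Finset.univ.filter (fun i => w i ≤ t)
        = Finset.univ.filter (fun i => w i ≤ q) := by
      ext i
      simp only [Finset.mem_filter, Finset.mem_univ, true_and]
      constructor
      · intro h
        by_contra hqi
        have h1 : q < w i := lt_of_not_ge hqi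
        have h2 : t' ≤ w i := Finset.inf'_le _ (by simp [hB, h1])
        exact absurd htt' (not_lt.mpr (h2.trans h))
      · intro h; exact h.trans hqt
    have := htA
    rw [hA] at this
    simp only [Set.mem_setOf_eq, confF] at this ⊢
    rwa [hfe] at this

/-- the quantile event only depends on the values strictly below x -/
lemma confQ_le_iff {m : ℕ} (α : ℝ) (w w' : Fin m → EReal) (p : Fin m → ℝ) (x : ℝ)
    (h : ∀ t : EReal, t < (x : ℝ) → ∀ i, (w i ≤ t ↔ w' i ≤ t)) :
    ((x : ℝ) : EReal) ≤ confQ α w p ↔ ((x : ℝ) : EReal) ≤ confQ α w' p := by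
  have key : ∀ t : EReal, t < (x : ℝ) → confF w p t = confF w' p t := by
    intro t ht
    unfold confF
    congr 1
    ext i
    simp [h t ht i]
  constructor
  · intro hx
    refine le_sInf fun t htA => ?_
    by_contra hc
    have ht : t < (x : ℝ) := lt_of_not_ge hc
    have : t ∈ {t : EReal | 1 - α ≤ confF w p t} := by
      simp only [Set.mem_setOf_eq] at htA ⊢
      rw [key t ht]; exact htA
    exact absurd (lt_of_le_of_lt (hx.trans (sInf_le this)) ht) (lt_irrefl _)
  · intro hx
    refine le_sInf fun t htA => ?_
    by_contra hc
    have ht : t < (x : ℝ) := lt_of_not_ge hc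
    have : t ∈ {t : EReal | 1 - α ≤ confF w' p t} := by
      simp only [Set.mem_setOf_eq] at htA ⊢
      rw [← key t ht]; exact htA
    exact absurd (lt_of_le_of_lt (hx.trans (sInf_le this)) ht) (lt_irrefl _)

/-- permutation invariance of the quantile -/
lemma confQ_perm {m : ℕ} (α : ℝ) (w : Fin m → EReal) (p : Fin m → ℝ)
    (τ : Equiv.Perm (Fin m)) :
    confQ α (fun i => w (τ i)) (fun i => p (τ i)) = confQ α w p := by
  unfold confQ
  congr 1
  ext t
  simp only [Set.mem_setOf_eq]
  have : confF (fun i => w (τ i)) (fun i => p (τ i)) t = confF w p t := by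
    unfold confF
    rw [Finset.sum_filter, Finset.sum_filter]
    exact Equiv.sum_comp τ (fun i => if w i ≤ t then p i else 0)
  rw [this]

/-- general conformal coverage theorem, discrete version: for an
arbitrary joint PMF `f` supported on injective tuples, with an injective
(symmetric) score function `s`, the conformal prediction event
`V_{n+1} ≤ Q_{1-α}(∑_{i≤n} P_{n+1}{Z_i | E_z} δ_{V_i} + P_{n+1}{Z_{n+1}|E_z} δ_∞)`
has probability at least `1 - α`. -/
theorem general_conformal_coverage
    {D : Type*} [Fintype D] (n : ℕ)
    (α : ℝ) (hα : α ∈ Set.Ioo (0 : ℝ) 1)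
    (f : (Fin (n + 1) → D) → ℝ) (hf0 : ∀ v, 0 ≤ f v) (hf1 : ∑ v, f v = 1)
    (hdist : ∀ v : Fin (n + 1) → D, ¬ Function.Injective v → f v = 0)
    (s : D → ℝ) (hs : Function.Injective s)
    (pw : (Fin (n + 1) → D) → Fin (n + 1) → ℝ)
    (hpw : ∀ v i, pw v i =
      (∑ σ ∈ Finset.univ.filter
          (fun σ : Equiv.Perm (Fin (n + 1)) => σ (Fin.last n) = i), f (v ∘ σ)) /
        (∑ σ : Equiv.Perm (Fin (n + 1)), f (v ∘ σ)))
    (qf : (Fin (n + 1) → D) → EReal)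
    (hqf : ∀ v, qf v = sInf {t : EReal | 1 - α ≤
        ∑ i ∈ Finset.univ.filter (fun i : Fin (n + 1) =>
          (if i = Fin.last n then (⊤ : EReal) else ((s (v i) : ℝ) : EReal)) ≤ t),
            pw v i}) :
    1 - α ≤ ∑ v ∈ Finset.univ.filter
        (fun v : Fin (n + 1) → D => ((s (v (Fin.last n)) : ℝ) : EReal) ≤ qf v), f v := by
  classical
  obtain ⟨hα0, hα1⟩ := hα
  set last : Fin (n + 1) := Fin.last n with hlast
  set w : (Fin (n + 1) → D) → Fin (n + 1) → EReal :=
    fun v i => ((s (v i) : ℝ) : EReal) with hw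
  -- qf in terms of confQ
  have hqf' : ∀ v, qf v = confQ α (fun i => if i = last then (⊤ : EReal) else w v i) (pw v) := by
    intro v
    rw [hqf v]
    rfl
  set q' : (Fin (n + 1) → D) → EReal := fun v => confQ α (w v) (pw v) with hq'
  -- Step A : event equivalence
  have keyA : ∀ v, (w v last ≤ qf v ↔ w v last ≤ q' v) := by
    intro v
    rw [hqf' v, hq']
    refine confQ_le_iff α _ (w v) (pw v) (s (v last)) ?_
    intro t ht i
    by_cases hi : i = last
    · subst hi
      have h1 : ¬ ((⊤ : EReal) ≤ t) := by
        intro h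
        rw [top_le_iff] at h
        subst h
        exact absurd ht (not_lt.mpr le_top)
      have h2 : ¬ (w v last ≤ t) := by
        intro h
        exact absurd (lt_of_le_of_lt h ht) (lt_irrefl _)
      simp only [if_pos rfl]
      exact iff_of_false h1 h2
    · simp [hi]
  -- rewrite the goal event
  have hfilter : Finset.univ.filter
        (fun v : Fin (n + 1) → D => ((s (v (Fin.last n)) : ℝ) : EReal) ≤ qf v)
      = Finset.univ.filter (fun v => w v last ≤ q' v) := by
    ext v
    simp only [Finset.mem_filter, Finset.mem_univ, true_and]
    exact keyA v
  rw [hfilter]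
  -- permutation facts
  have hcomp : ∀ (v : Fin (n + 1) → D) (τ σ : Equiv.Perm (Fin (n + 1))),
      (v ∘ τ) ∘ σ = v ∘ (τ * σ) := by
    intro v τ σ
    funext i
    simp [Equiv.Perm.mul_apply, Function.comp]
  have hpwperm : ∀ (v : Fin (n + 1) → D) (τ : Equiv.Perm (Fin (n + 1))) i,
      pw (v ∘ τ) i = pw v (τ i) := by
    intro v τ i
    rw [hpw, hpw]
    congr 1
    · -- numerator
      refine Finset.sum_nbij' (fun σ => τ * σ) (fun σ => τ⁻¹ * σ) ?_ ?_ ?_ ?_ ?_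
      · intro σ hσ
        simp only [Finset.mem_filter, Finset.mem_univ, true_and] at hσ ⊢
        simp [Equiv.Perm.mul_apply, hσ]
      · intro σ hσ
        simp only [Finset.mem_filter, Finset.mem_univ, true_and] at hσ ⊢
        simp [Equiv.Perm.mul_apply, hσ]
      · intro σ _; simp [mul_assoc]
      · intro σ _; simp [mul_assoc]
      · intro σ _
        rw [hcomp]
    · -- denominator
      have e1 : (∑ σ : Equiv.Perm (Fin (n + 1)), f ((v ∘ τ) ∘ σ))
            = ∑ σ : Equiv.Perm (Fin (n + 1)), f (v ∘ ((τ * σ) : Equiv.Perm (Fin (n + 1)))) :=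
          Finset.sum_congr rfl fun σ _ => by rw [hcomp]
      rw [e1]
      exact Fintype.sum_equiv (Equiv.mulLeft τ)
        (fun σ => f (v ∘ ((τ * σ) : Equiv.Perm (Fin (n + 1)))))
        (fun σ => f (v ∘ σ)) (fun σ => rfl)
  have hq'perm : ∀ (v : Fin (n + 1) → D) (τ : Equiv.Perm (Fin (n + 1))),
      q' (v ∘ τ) = q' v := by
    intro v τ
    have h2 : pw (v ∘ τ) = fun i => pw v (τ i) := funext (hpwperm v τ)
    show confQ α (w (v ∘ τ)) (pw (v ∘ τ)) = confQ α (w v) (pw v)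
    rw [h2]
    exact confQ_perm α (w v) (pw v) τ
  -- definitions
  set g : (Fin (n + 1) → D) → ℝ := fun v => if w v last ≤ q' v then f v else 0 with hg
  set T : (Fin (n + 1) → D) → ℝ := fun v => ∑ σ : Equiv.Perm (Fin (n + 1)), f (v ∘ σ) with hT
  have hTnn : ∀ v, 0 ≤ T v := fun v => Finset.sum_nonneg fun σ _ => hf0 _
  -- inner bound
  have hinner : ∀ v, (1 - α) * T v ≤ ∑ σ : Equiv.Perm (Fin (n + 1)), g (v ∘ σ) := by
    intro v
    by_cases hTz : T v = 0
    · have hz : ∀ σ : Equiv.Perm (Fin (n + 1)), f (v ∘ σ) = 0 := by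
        intro σ
        exact (Finset.sum_eq_zero_iff_of_nonneg
          (f := fun σ : Equiv.Perm (Fin (n + 1)) => f (v ∘ σ))
          (fun σ _ => hf0 (v ∘ σ))).mp hTz σ (Finset.mem_univ σ)
      have hgz : ∀ σ : Equiv.Perm (Fin (n + 1)), g (v ∘ σ) = 0 := by
        intro σ
        simp [hg, hz σ]
      rw [Finset.sum_congr rfl fun σ _ => hgz σ, Finset.sum_const, hTz]
      simp
    · have hTpos : 0 < T v := lt_of_le_of_ne (hTnn v) (Ne.symm hTz)
      set N : Fin (n + 1) → ℝ := fun i => ∑ σ ∈ Finset.univ.filter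
          (fun σ : Equiv.Perm (Fin (n + 1)) => σ last = i), f (v ∘ σ) with hN
      have hNsum : ∑ i, N i = T v :=
        Finset.sum_fiberwise Finset.univ (fun σ : Equiv.Perm (Fin (n + 1)) => σ last)
          (fun σ => f (v ∘ σ))
      have hpwv : ∀ i, pw v i = N i / T v := fun i => hpw v i
      have hpw1 : ∑ i, pw v i = 1 := by
        rw [Finset.sum_congr rfl fun i _ => hpwv i, ← Finset.sum_div, hNsum,
          div_self hTz]
      have hNpw : ∀ i, N i = pw v i * T v := by
        intro i
        rw [hpwv i, div_mul_cancel₀ _ hTz]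
      -- step1 : group the sum over permutations by σ last
      have step1 : ∑ σ : Equiv.Perm (Fin (n + 1)), g (v ∘ σ)
          = ∑ i, (if w v i ≤ q' v then N i else 0) := by
        rw [← Finset.sum_fiberwise Finset.univ
            (fun σ : Equiv.Perm (Fin (n + 1)) => σ last) (fun σ => g (v ∘ σ))]
        refine Finset.sum_congr rfl fun i _ => ?_
        have hgσ : ∀ σ ∈ Finset.univ.filter
            (fun σ : Equiv.Perm (Fin (n + 1)) => σ last = i),
            g (v ∘ σ) = if w v i ≤ q' v then f (v ∘ σ) else 0 := by
          intro σ hσ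
          have hσi : σ last = i := (Finset.mem_filter.mp hσ).2
          have hwv : w (v ∘ σ) last = w v i := by
            simp [hw, Function.comp, hσi]
          rw [hg]
          simp only
          rw [hwv, hq'perm v σ]
        rw [Finset.sum_congr rfl hgσ]
        by_cases hc : w v i ≤ q' v
        · simp [hc, hN]
        · simp [hc]
      have hcov := confQ_cov hα0 (w v) (pw v) hpw1
      have hpwnn : ∀ i, 0 ≤ pw v i := by
        intro i
        rw [hpwv i]
        exact div_nonneg (Finset.sum_nonneg fun σ _ => hf0 _) (hTnn v)
      calc (1 - α) * T v ≤ (confF (w v) (pw v) (q' v)) * T v :=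
            mul_le_mul_of_nonneg_right hcov (hTnn v)
        _ = ∑ i ∈ Finset.univ.filter (fun i => w v i ≤ q' v), pw v i * T v := by
            rw [confF, Finset.sum_mul]
        _ = ∑ i, (if w v i ≤ q' v then N i else 0) := by
            rw [Finset.sum_filter]
            refine Finset.sum_congr rfl fun i _ => ?_
            by_cases hc : w v i ≤ q' v <;> simp [hc, hNpw i]
        _ = ∑ σ : Equiv.Perm (Fin (n + 1)), g (v ∘ σ) := step1.symm
  -- sum the inner bound over v
  have hswap : ∀ (h : (Fin (n + 1) → D) → ℝ) (σ : Equiv.Perm (Fin (n + 1))),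
      ∑ v : Fin (n + 1) → D, h (v ∘ σ) = ∑ v : Fin (n + 1) → D, h v := by
    intro h σ
    refine Fintype.sum_equiv (Equiv.arrowCongr σ.symm (Equiv.refl D)) _ _ fun v => ?_
    congr 1
  set c : ℝ := (Fintype.card (Equiv.Perm (Fin (n + 1))) : ℝ) with hc
  have hcpos : 0 < c := by
    rw [hc]
    exact_mod_cast Fintype.card_pos
  have hTtot : ∑ v : Fin (n + 1) → D, T v = c := by
    rw [hT]
    simp only
    rw [Finset.sum_comm]
    rw [Finset.sum_congr rfl fun σ _ => hswap f σ]
    rw [hf1, Finset.sum_const, hc]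
    simp
  have hgtot : ∑ v : Fin (n + 1) → D, (∑ σ : Equiv.Perm (Fin (n + 1)), g (v ∘ σ))
      = c * ∑ v : Fin (n + 1) → D, g v := by
    rw [Finset.sum_comm]
    rw [Finset.sum_congr rfl fun σ _ => hswap g σ]
    rw [Finset.sum_const, hc]
    simp [mul_comm]
  have hmain : (1 - α) * c ≤ c * ∑ v : Fin (n + 1) → D, g v := by
    calc (1 - α) * c = ∑ v : Fin (n + 1) → D, (1 - α) * T v := by
          rw [← Finset.mul_sum, hTtot]
      _ ≤ ∑ v : Fin (n + 1) → D, (∑ σ : Equiv.Perm (Fin (n + 1)), g (v ∘ σ)) :=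
          Finset.sum_le_sum fun v _ => hinner v
      _ = c * ∑ v : Fin (n + 1) → D, g v := hgtot
  have hfin : 1 - α ≤ ∑ v : Fin (n + 1) → D, g v := by
    have := hmain
    rw [mul_comm (1 - α) c] at this
    exact le_of_mul_le_mul_left this hcpos
  rw [Finset.sum_filter]
  exact hfin
end

section
/- Under one-step feedback covariate shift (t = 1) with joint density f(z₁,...,z_{n+1}) = ∏_{j=1}^{n} p₀(x_j) q(y_j|x_j) · p₁(x_{n+1} ; {z₁,...,z_n}) q(y_{n+1}|x_{n+1}), where p₁(· ; S) depends symmetrically on the multiset S, the conformal weight for index i simplifies to P{Z_{n+1}=z_i | E_z} = [∏_{j≠i} p₀(x_j)] p₁(x_i ; z_{-{i}}) / ∑_{k=1}^{n+1} [∏_{j≠k} p₀(x_j)] p₁(x_k ; z_{-{k}}), since for each fixed choice of σ(n+1)=i, all n! orderings of the remaining points contribute equal weight. -/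
open scoped Classical

/-- under one-step feedback covariate shift, with joint density
`f(z₁,...,z_{n+1}) = ∏_{j≤n} p₀(x_j) q(y_j|x_j) · p₁(x_{n+1}; {z₁,...,z_n}) q(y_{n+1}|x_{n+1})`
(where `p₁(·; S)` depends symmetrically on the multiset `S`), the conformal
weight `P{Z_{n+1} = z_i | E_z}` simplifies to
`[∏_{j≠i} p₀(x_j)] p₁(x_i ; z_{-i}) / ∑_k [∏_{j≠k} p₀(x_j)] p₁(x_k ; z_{-k})`. -/
theorem one_step_fcs_weights
    {X Y : Type*} [Fintype X] [Fintype Y] (n : ℕ)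
    (p0 : X → ℝ) (q : Y → X → ℝ) (p1 : X → Multiset (X × Y) → ℝ)
    (hp0 : ∀ x, 0 ≤ p0 x) (hqnn : ∀ y x, 0 ≤ q y x) (hp1 : ∀ x S, 0 ≤ p1 x S)
    (f : (Fin (n + 1) → X × Y) → ℝ)
    (hf : ∀ v, f v =
      (∏ j ∈ Finset.univ.erase (Fin.last n), p0 ((v j).1))
      * p1 ((v (Fin.last n)).1)
          ((Finset.univ.erase (Fin.last n)).val.map (fun j => v j))
      * ∏ j, q ((v j).2) ((v j).1))
    (z : Fin (n + 1) → X × Y) (hz : Function.Injective z) (i : Fin (n + 1))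
    (hqpos : 0 < ∏ j, q ((z j).2) ((z j).1))
    (hden : 0 < ∑ k : Fin (n + 1),
        (∏ j ∈ Finset.univ.erase k, p0 ((z j).1)) *
          p1 ((z k).1) ((Finset.univ.erase k).val.map (fun j => z j))) :
    (∑ v ∈ Finset.univ.filter (fun v : Fin (n + 1) → X × Y =>
        (∃ σ : Equiv.Perm (Fin (n + 1)), v = z ∘ σ) ∧ v (Fin.last n) = z i), f v) /
      (∑ v ∈ Finset.univ.filter (fun v : Fin (n + 1) → X × Y =>
        ∃ σ : Equiv.Perm (Fin (n + 1)), v = z ∘ σ), f v)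
    = ((∏ j ∈ Finset.univ.erase i, p0 ((z j).1)) *
          p1 ((z i).1) ((Finset.univ.erase i).val.map (fun j => z j))) /
      (∑ k : Fin (n + 1),
        (∏ j ∈ Finset.univ.erase k, p0 ((z j).1)) *
          p1 ((z k).1) ((Finset.univ.erase k).val.map (fun j => z j))) := by
  classical
  set C : ℝ := ∏ j, q ((z j).2) ((z j).1) with hC
  set w : Fin (n + 1) → ℝ := fun k =>
      (∏ j ∈ Finset.univ.erase k, p0 ((z j).1)) *
        p1 ((z k).1) ((Finset.univ.erase k).val.map (fun j => z j)) with hw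
  -- key: value of f on z ∘ σ
  have key : ∀ σ : Equiv.Perm (Fin (n + 1)), f (z ∘ σ) = C * w (σ (Fin.last n)) := by
    intro σ
    rw [hf]
    have hset : (Finset.univ.erase (Fin.last n)).map σ.toEmbedding
        = Finset.univ.erase (σ (Fin.last n)) := by
      rw [Finset.map_erase, Finset.map_univ_equiv]; rfl
    have h1 : (∏ j ∈ Finset.univ.erase (Fin.last n), p0 (((z ∘ σ) j).1))
        = ∏ j ∈ Finset.univ.erase (σ (Fin.last n)), p0 ((z j).1) := by
      rw [← hset, Finset.prod_map]
      rfl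
    have h2 : ((Finset.univ.erase (Fin.last n)).val.map (fun j => (z ∘ σ) j))
        = (Finset.univ.erase (σ (Fin.last n))).val.map (fun j => z j) := by
      rw [← hset, Finset.map_val, Multiset.map_map]
      rfl
    have h3 : (∏ j, q (((z ∘ σ) j).2) (((z ∘ σ) j).1)) = C := by
      rw [hC]
      exact Equiv.prod_comp σ (fun j => q ((z j).2) ((z j).1))
    rw [h1, h2, h3]
    simp only [hw, Function.comp_apply]
    ring
  have hinj : Function.Injective (fun σ : Equiv.Perm (Fin (n + 1)) => z ∘ σ) := by
    intro σ τ h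
    exact Equiv.ext (fun j => hz (congrFun h j))
  -- numerator
  have hnum : (Finset.univ.filter (fun v : Fin (n + 1) → X × Y =>
        (∃ σ : Equiv.Perm (Fin (n + 1)), v = z ∘ σ) ∧ v (Fin.last n) = z i))
      = Finset.image (fun σ : Equiv.Perm (Fin (n + 1)) => z ∘ σ)
          (Finset.univ.filter (fun σ => σ (Fin.last n) = i)) := by
    ext v
    simp only [Finset.mem_filter, Finset.mem_univ, true_and, Finset.mem_image]
    constructor
    · rintro ⟨⟨σ, rfl⟩, hv⟩
      exact ⟨σ, hz hv, rfl⟩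
    · rintro ⟨σ, hσ, rfl⟩
      exact ⟨⟨σ, rfl⟩, by simp [hσ]⟩
  have hden' : (Finset.univ.filter (fun v : Fin (n + 1) → X × Y =>
        ∃ σ : Equiv.Perm (Fin (n + 1)), v = z ∘ σ))
      = Finset.image (fun σ : Equiv.Perm (Fin (n + 1)) => z ∘ σ) Finset.univ := by
    ext v
    simp only [Finset.mem_filter, Finset.mem_univ, true_and, Finset.mem_image]
    constructor
    · rintro ⟨σ, rfl⟩; exact ⟨σ, rfl⟩
    · rintro ⟨σ, rfl⟩; exact ⟨σ, rfl⟩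
  set N : Fin (n + 1) → ℕ := fun k =>
      (Finset.univ.filter (fun σ : Equiv.Perm (Fin (n + 1)) => σ (Fin.last n) = k)).card
    with hN
  have hNconst : ∀ k, N k = N i := by
    intro k
    apply Finset.card_bij' (fun σ _ => Equiv.swap k i * σ) (fun σ _ => Equiv.swap k i * σ)
    · intro σ hσ
      simp only [Finset.mem_filter, Finset.mem_univ, true_and] at hσ ⊢
      simp [Equiv.Perm.mul_apply, hσ]
    · intro σ hσ
      simp only [Finset.mem_filter, Finset.mem_univ, true_and] at hσ ⊢
      simp [Equiv.Perm.mul_apply, hσ, Equiv.swap_apply_right]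
    · intro σ _; simp [← mul_assoc]
    · intro σ _; simp [← mul_assoc]
  have hNpos : 0 < N i := by
    rw [hN]
    apply Finset.card_pos.mpr
    exact ⟨Equiv.swap (Fin.last n) i, by simp⟩
  -- compute numerator
  have num_eq : (∑ v ∈ Finset.univ.filter (fun v : Fin (n + 1) → X × Y =>
        (∃ σ : Equiv.Perm (Fin (n + 1)), v = z ∘ σ) ∧ v (Fin.last n) = z i), f v)
      = (N i : ℝ) * (C * w i) := by
    rw [hnum, Finset.sum_image (fun a _ b _ h => hinj h)]
    rw [Finset.sum_congr rfl (fun σ hσ => by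
      rw [key σ, (Finset.mem_filter.mp hσ).2])]
    rw [Finset.sum_const, nsmul_eq_mul]
  have den_eq : (∑ v ∈ Finset.univ.filter (fun v : Fin (n + 1) → X × Y =>
        ∃ σ : Equiv.Perm (Fin (n + 1)), v = z ∘ σ), f v)
      = (N i : ℝ) * (C * ∑ k, w k) := by
    rw [hden', Finset.sum_image (fun a _ b _ h => hinj h)]
    rw [Finset.sum_congr rfl (fun σ _ => key σ)]
    rw [← Finset.sum_fiberwise Finset.univ (fun σ : Equiv.Perm (Fin (n + 1)) => σ (Fin.last n))
      (fun σ => C * w (σ (Fin.last n)))]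
    have : ∀ k : Fin (n + 1),
        (∑ σ ∈ Finset.univ.filter (fun σ : Equiv.Perm (Fin (n + 1)) => σ (Fin.last n) = k),
          C * w (σ (Fin.last n))) = (N i : ℝ) * (C * w k) := by
      intro k
      rw [Finset.sum_congr rfl (fun σ hσ => by rw [(Finset.mem_filter.mp hσ).2]),
        Finset.sum_const, nsmul_eq_mul,
        show (Finset.univ.filter
          (fun σ : Equiv.Perm (Fin (n + 1)) => σ (Fin.last n) = k)).card = N k from rfl,
        hNconst k]
    rw [Finset.sum_congr rfl (fun k _ => this k), ← Finset.mul_sum, ← Finset.mul_sum]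
  rw [num_eq, den_eq, mul_div_mul_left _ _ (by positivity), mul_div_mul_left _ _ (by positivity)]
end
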